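/- Let D = (V, A) and D' = (V, A') be directed acyclic graphs with A ⊇ A', let B' ∈ AR(D') with reoriented graph E', and set B = {(u,v) ∈ A : E' contains a directed path from v to u}. Then the following are equivalent: (i) B ∈ AR(D), i.e., the reoriented graph E_B is acyclic; (ii) the fiber ρ^{-1}(B') has a least element in AR(D); (iii) every directed cycle each of whose arcs is either an arc of E' or an arc of A ∖ A' contains at least one arc (u,v) ∈ A ∖ A' such that E' contains a directed path from v to u. Moreover, when these conditions hold, B is the least element of ρ^{-1}(B'). -/

import Mathlib

def ArcRel {V : Type*} (E : Set (V × V)) : V → V → Prop := fun x y => (x, y) ∈ E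

/-- `E` has no directed cycle. -/
def AcyclicArcs {V : Type*} (E : Set (V × V)) : Prop :=
  ∀ v : V, ¬ Relation.TransGen (ArcRel E) v v

/-- `A` is the arc set of a directed acyclic graph: arcs join distinct vertices,
at most one direction between two vertices, and no directed cycle. -/
def IsDAG {V : Type*} (A : Set (V × V)) : Prop :=
  (∀ a ∈ A, a.1 ≠ a.2) ∧ (∀ a ∈ A, Prod.swap a ∉ A) ∧ AcyclicArcs A

/-- Arc set of the reorientation of `A` where exactly the arcs of `B` are reversed. -/
def reorient {V : Type*} (A B : Set (V × V)) : Set (V × V) :=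
  (A \ B) ∪ (Prod.swap '' B)

/-- `B` encodes an acyclic reorientation of `A`. -/
def ARmem {V : Type*} (A B : Set (V × V)) : Prop :=
  B ⊆ A ∧ AcyclicArcs (reorient A B)

/-- The acyclic reorientation poset of `A`, ordered by inclusion of reversed sets. -/
abbrev ARP {V : Type*} (A : Set (V × V)) := {B : Set (V × V) // ARmem A B}

/-- The arcs of a cyclic sequence of vertices (consecutive pairs, with wrap-around). -/
def cycleArcs {V : Type*} (p : List V) : List (V × V) := p.zip (p.rotate 1)

/-- A directed cycle with arcs in `E`: a nonempty cyclic sequence of pairwise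
distinct vertices all of whose (cyclically) consecutive pairs are arcs of `E`. -/
def IsDirCycle {V : Type*} (E : Set (V × V)) (p : List V) : Prop :=
  p ≠ [] ∧ p.Nodup ∧ ∀ a ∈ cycleArcs p, a ∈ E

/-- A simple cycle of the directed graph `A` together with a traversal direction:
a nonempty cyclic sequence of pairwise distinct vertices in which consecutive
vertices are joined by an arc of `A` in one direction or the other.  An arc
`a ∈ cycleArcs p` is *forward* if `a ∈ A` and *backward* if `Prod.swap a ∈ A`. -/
def IsUCycle {V : Type*} (A : Set (V × V)) (p : List V) : Prop :=
  p ≠ [] ∧ p.Nodup ∧ ∀ a ∈ cycleArcs p, (a ∈ A ∨ Prod.swap a ∈ A)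

/-- The candidate minimum of the fiber of `B'`: arcs `(u,v)` of `A` such that the
reorientation `E'` of `A'` contains a directed path from `v` to `u`. -/
def minFiberCand {V : Type*} (A A' B' : Set (V × V)) : Set (V × V) :=
  {a ∈ A | Relation.TransGen (ArcRel (reorient A' B')) a.2 a.1}

/-!
Every member `C` of the fiber of `B'` must reverse each arc `(u,v)` of `A` whose head reaches its
tail in `E'`, for otherwise that path and the arc `(u,v)` form a cycle of `E_C`; so the candidate
`B` lies below the whole fiber. Conversely, if `(u,v) ∈ A` is not in `B`, then `E'` plus the arc
`(u,v)` is still acyclic, and orienting `A` along a linear extension of it gives a member of the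
fiber that keeps `(u,v)`; hence a least element of the fiber can only be `B`. Finally, every arc
of `A \ A'` reversed in `E_B` can be replaced by the path of `E'` that forced its reversal, so
`E_B` is acyclic iff `E'` together with the unreversed arcs of `A \ A'` is, which is (iii).
-/

section

open Relation

variable {V : Type*}

theorem List.forall_mem_zip_iff_isChain_cons {R : V → V → Prop} :
    ∀ (x : V) (t : List V), (∀ a ∈ (x :: t).zip t, R a.1 a.2) ↔ (x :: t).IsChain R
  | x, [] => by simp
  | x, y :: t => by
    rw [zip_cons_cons, forall_mem_cons, isChain_cons_cons, forall_mem_zip_iff_isChain_cons y t]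

theorem List.exists_nodup_isChain_cons_of_reflTransGen {R : V → V → Prop} {a b : V}
    (h : ReflTransGen R a b) :
    ∃ l, (a :: l).Nodup ∧ (a :: l).IsChain R ∧ (a :: l).getLast? = some b := by
  induction h using ReflTransGen.head_induction_on with
  | refl => exact ⟨[], nodup_singleton b, isChain_singleton b, rfl⟩
  | @head c d hcd _ ih =>
    obtain ⟨l, hnd, hch, hlast⟩ := ih
    by_cases hc : c ∈ d :: l
    · -- the walk already visits `c`: keep only the part from `c` on
      obtain ⟨s, t, hst⟩ := append_of_mem hc
      rw [hst] at hnd hch hlast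
      refine ⟨t, hnd.sublist (sublist_append_right s _), hch.suffix (suffix_append s _), ?_⟩
      rwa [getLast?_append_of_ne_nil _ (cons_ne_nil c t)] at hlast
    · exact ⟨d :: l, nodup_cons.mpr ⟨hc, hnd⟩, hch.cons_cons hcd, by rwa [getLast?_cons_cons]⟩

theorem isDirCycle_cons_iff {E : Set (V × V)} {x : V} {t : List V} :
    IsDirCycle E (x :: t) ↔ (x :: t).Nodup ∧ (x :: t ++ [x]).IsChain (ArcRel E) := by
  have hzip := List.zip_append (l₁ := x :: t) (r₁ := [x]) (l₂ := t ++ [x]) (r₂ := []) (by simp)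
  have harcs : cycleArcs (x :: t) = (x :: (t ++ [x])).zip (t ++ [x]) := by
    simpa [cycleArcs, List.rotate_cons_succ] using hzip.symm
  rw [IsDirCycle, harcs, List.cons_append, ← List.forall_mem_zip_iff_isChain_cons]
  simp [ArcRel]

theorem acyclicArcs_iff_forall_not_isDirCycle {E : Set (V × V)} :
    AcyclicArcs E ↔ ∀ p, ¬ IsDirCycle E p := by
  constructor
  · rintro hE (_ | ⟨x, t⟩) hp
    · exact hp.1 rfl
    · obtain ⟨y, l, hyl⟩ : ∃ y l, t ++ [x] = y :: l := List.exists_cons_of_ne_nil (by simp)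
      have hch := (isDirCycle_cons_iff.mp hp).2
      rw [List.cons_append, hyl, List.isChain_cons_cons] at hch
      have hlast : (y :: l).getLast (List.cons_ne_nil y l) = x := by
        simp_rw [← hyl, List.getLast_append_singleton]
      exact hE x (TransGen.head' hch.1
        (hlast ▸ List.relationReflTransGen_of_exists_isChain_cons l hch.2 rfl))
  · intro h v hv
    obtain ⟨w, hvw, hwv⟩ := TransGen.head'_iff.mp hv
    obtain ⟨l, hnd, hch, hlast⟩ := List.exists_nodup_isChain_cons_of_reflTransGen hwv
    refine h (w :: l) (isDirCycle_cons_iff.mpr ⟨hnd, List.isChain_append.mpr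
      ⟨hch, List.isChain_singleton w, fun y hy z hz => ?_⟩⟩)
    rw [hlast, Option.mem_some_iff] at hy
    rw [List.head?_cons, Option.mem_some_iff] at hz
    exact hy ▸ hz ▸ hvw

theorem AcyclicArcs.of_le_transGen {E F : Set (V × V)}
    (hEF : ∀ x y, ArcRel E x y → TransGen (ArcRel F) x y) (hF : AcyclicArcs F) :
    AcyclicArcs E :=
  fun v hv => hF v (TransGen.closed hEF v v hv)

theorem AcyclicArcs.mono {E F : Set (V × V)} (hEF : E ⊆ F) (hF : AcyclicArcs F) :
    AcyclicArcs E :=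
  hF.of_le_transGen fun _ _ h => TransGen.single (hEF h)

theorem AcyclicArcs.exists_isLinearOrder {E : Set (V × V)} (hE : AcyclicArcs E) :
    ∃ s : V → V → Prop, IsLinearOrder V s ∧ ∀ x y, ArcRel E x y → s x y := by
  let _ : IsPartialOrder V (ReflTransGen (ArcRel E)) :=
    { refl := fun _ => ReflTransGen.refl
      trans := fun _ _ _ => ReflTransGen.trans
      antisymm := fun x y hxy hyx => by
        rcases reflTransGen_iff_eq_or_transGen.mp hyx with rfl | hyx
        · rfl
        · exact absurd (hyx.trans_left hxy) (hE y) }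
  obtain ⟨s, hs, hle⟩ := extend_partialOrder (ReflTransGen (ArcRel E))
  exact ⟨s, hs, fun x y h => hle x y (ReflTransGen.single h)⟩

theorem acyclicArcs_reorient_of_isLinearOrder {A : Set (V × V)} (hA : ∀ a ∈ A, a.1 ≠ a.2)
    (s : V → V → Prop) [IsLinearOrder V s] :
    AcyclicArcs (reorient A {e ∈ A | ¬ s e.1 e.2}) := by
  let lt : V → V → Prop := fun x y => s x y ∧ x ≠ y
  have : IsTrans V lt := ⟨fun x y z hxy hyz =>
    ⟨_root_.trans hxy.1 hyz.1, fun hxz => hxy.2 (antisymm hxy.1 (hxz ▸ hyz.1))⟩⟩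
  have hlt : ∀ e ∈ reorient A {e ∈ A | ¬ s e.1 e.2}, lt e.1 e.2 := by
    rintro e (⟨heA, hes⟩ | ⟨e, ⟨heA, hes⟩, rfl⟩)
    · exact ⟨not_not.mp fun h => hes ⟨heA, h⟩, hA e heA⟩
    · exact ⟨(total_of s e.1 e.2).resolve_left hes, (hA e heA).symm⟩
  intro v hv
  exact (transGen_eq_self (r := lt) ▸
    TransGen.closed (fun x y h => TransGen.single (hlt (x, y) h)) v v hv).2 rfl

theorem AcyclicArcs.exists_compatible_armem {E : Set (V × V)} (hE : AcyclicArcs E)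
    {A : Set (V × V)} (hA : ∀ a ∈ A, a.1 ≠ a.2) :
    ∃ C, ARmem A C ∧ ∀ e ∈ A, (e ∈ E → e ∉ C) ∧ (e.swap ∈ E → e ∈ C) := by
  obtain ⟨s, hs, hEs⟩ := hE.exists_isLinearOrder
  refine ⟨{e ∈ A | ¬ s e.1 e.2}, ⟨fun e he => he.1, acyclicArcs_reorient_of_isLinearOrder hA s⟩,
    fun e heA => ⟨fun he hC => hC.2 (hEs _ _ he), fun he => ⟨heA, fun hs => hA e heA ?_⟩⟩⟩
  exact antisymm hs (hEs _ _ he)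

theorem transGen_arcRel_insert {E : Set (V × V)} {a : V × V} {x y : V}
    (h : TransGen (ArcRel (insert a E)) x y) :
    TransGen (ArcRel E) x y ∨ (ReflTransGen (ArcRel E) x a.1 ∧ ReflTransGen (ArcRel E) a.2 y) := by
  induction h with
  | single h =>
    rcases h with h | h
    · subst h
      exact Or.inr ⟨.refl, .refl⟩
    · exact Or.inl (TransGen.single h)
  | tail _ h ih =>
    rcases h with h | h
    · subst h
      exact Or.inr ⟨ih.elim TransGen.to_reflTransGen And.left, .refl⟩
    · rcases ih with ih | ⟨hx, hy⟩
      · exact Or.inl (ih.tail h)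
      · exact Or.inr ⟨hx, hy.tail h⟩

theorem AcyclicArcs.insert {E : Set (V × V)} (hE : AcyclicArcs E) {a : V × V}
    (ha : ¬ ReflTransGen (ArcRel E) a.2 a.1) : AcyclicArcs (insert a E) := fun v hv =>
  (transGen_arcRel_insert hv).elim (hE v) fun ⟨hva, hav⟩ => ha (hav.trans hva)

theorem IsDirCycle.mono {E F : Set (V × V)} (hEF : E ⊆ F) {p : List V} (hp : IsDirCycle E p) :
    IsDirCycle F p :=
  ⟨hp.1, hp.2.1, fun a ha => hEF (hp.2.2 a ha)⟩

theorem reorient_inter_subset {A A' B' : Set (V × V)} (hA : ∀ a ∈ A, a.swap ∉ A)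
    (hsub : A' ⊆ A) (hB' : B' ⊆ A') : reorient A' B' ∩ A ⊆ A' := by
  rintro e ⟨⟨heA', -⟩ | ⟨b, hb, rfl⟩, heA⟩
  · exact heA'
  · exact absurd (hsub (hB' hb)) (hA _ heA)

section Fiber

variable {A A' B' : Set (V × V)}

theorem minFiberCand_subset : minFiberCand A A' B' ⊆ A := fun _ h => h.1

theorem minFiberCand_inter_eq (hsub : A' ⊆ A) (hB' : ARmem A' B') :
    minFiberCand A A' B' ∩ A' = B' := by
  ext e
  constructor
  · rintro ⟨⟨-, hpath⟩, heA'⟩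
    by_contra heB'
    exact hB'.2 e.1 (hpath.head (Or.inl ⟨heA', heB'⟩))
  · intro heB'
    exact ⟨⟨hsub (hB'.1 heB'), TransGen.single (Or.inr ⟨e, heB', rfl⟩)⟩, hB'.1 heB'⟩

theorem minFiberCand_subset_of_inter_eq (hsub : A' ⊆ A) {C : Set (V × V)} (hC : ARmem A C)
    (hCA' : C ∩ A' = B') : minFiberCand A A' B' ⊆ C := by
  have hE' : ∀ x y, ArcRel (reorient A' B') x y → ArcRel (reorient A C) x y := by
    rintro x y (⟨heA', heB'⟩ | ⟨b, hb, hbe⟩)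
    · exact Or.inl ⟨hsub heA', fun heC => heB' (hCA' ▸ ⟨heC, heA'⟩)⟩
    · exact Or.inr ⟨b, (hCA'.superset hb).1, hbe⟩
  rintro a ⟨haA, hpath⟩
  by_contra haC
  exact hC.2 a.1 ((TransGen.mono hE' _ _ hpath).head (Or.inl ⟨haA, haC⟩))

theorem exists_mem_fiber_not_mem (hA : ∀ a ∈ A, a.1 ≠ a.2) (hsub : A' ⊆ A) (hB' : ARmem A' B')
    {a : V × V} (haA : a ∈ A) (ha : a ∉ minFiberCand A A' B') :
    ∃ C, ARmem A C ∧ C ∩ A' = B' ∧ a ∉ C := by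
  have hpath : ¬ ReflTransGen (ArcRel (reorient A' B')) a.2 a.1 := fun h =>
    (reflTransGen_iff_eq_or_transGen.mp h).elim (hA a haA) fun h => ha ⟨haA, h⟩
  obtain ⟨C, hC, hcompat⟩ := (hB'.2.insert hpath).exists_compatible_armem hA
  refine ⟨C, hC, Set.ext fun e => ⟨fun ⟨heC, heA'⟩ => ?_, fun heB' => ⟨?_, hB'.1 heB'⟩⟩,
    (hcompat a haA).1 (Set.mem_insert a _)⟩
  · by_contra heB'
    exact (hcompat e (hsub heA')).1 (Or.inr (Or.inl ⟨heA', heB'⟩)) heC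
  · exact (hcompat e (hsub (hB'.1 heB'))).2 (Or.inr (Or.inr ⟨e, heB', rfl⟩))

theorem armem_minFiberCand_iff_exists_least (hA : ∀ a ∈ A, a.1 ≠ a.2) (hsub : A' ⊆ A)
    (hB' : ARmem A' B') :
    ARmem A (minFiberCand A A' B') ↔
      ∃ M, (ARmem A M ∧ M ∩ A' = B') ∧ ∀ C, ARmem A C → C ∩ A' = B' → M ⊆ C := by
  refine ⟨fun h => ⟨_, ⟨h, minFiberCand_inter_eq hsub hB'⟩,
    fun C => minFiberCand_subset_of_inter_eq hsub⟩, ?_⟩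
  rintro ⟨M, ⟨hM, hMA'⟩, hleast⟩
  suffices M = minFiberCand A A' B' from this ▸ hM
  refine (minFiberCand_subset_of_inter_eq hsub hM hMA').antisymm' fun a haM => ?_
  by_contra ha
  obtain ⟨C, hC, hCA', haC⟩ := exists_mem_fiber_not_mem hA hsub hB' (hM.1 haM) ha
  exact haC (hleast C hC hCA' haM)

theorem acyclicArcs_reorient_minFiberCand_iff (hsub : A' ⊆ A) (hB' : ARmem A' B') :
    AcyclicArcs (reorient A (minFiberCand A A' B')) ↔
      AcyclicArcs (reorient A' B' ∪ ((A \ A') \ minFiberCand A A' B')) := by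
  have hinter := minFiberCand_inter_eq hsub hB'
  have hB'sub : B' ⊆ minFiberCand A A' B' := hinter.superset.trans Set.inter_subset_left
  constructor
  · refine AcyclicArcs.mono ?_
    rintro e ((⟨heA', heB'⟩ | ⟨b, hb, rfl⟩) | ⟨⟨heA, -⟩, heB⟩)
    · exact Or.inl ⟨hsub heA', fun heB => heB' (hinter ▸ ⟨heB, heA'⟩)⟩
    · exact Or.inr ⟨b, hB'sub hb, rfl⟩
    · exact Or.inl ⟨heA, heB⟩
  · refine AcyclicArcs.of_le_transGen ?_
    rintro x y (⟨heA, heB⟩ | ⟨b, ⟨-, hpath⟩, hbe⟩)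
    · by_cases heA' : (x, y) ∈ A'
      · exact TransGen.single (Or.inl (Or.inl ⟨heA', fun heB' => heB (hinter ▸ heB').1⟩))
      · exact TransGen.single (Or.inr ⟨⟨heA, heA'⟩, heB⟩)
    · obtain ⟨rfl, rfl⟩ := Prod.ext_iff.mp hbe
      exact TransGen.mono (fun _ _ h => Or.inl h) _ _ hpath

theorem not_isDirCycle_diff_minFiberCand_iff (hA : ∀ a ∈ A, a.swap ∉ A) (hsub : A' ⊆ A)
    (hB' : ARmem A' B') (p : List V) :
    ¬ IsDirCycle (reorient A' B' ∪ ((A \ A') \ minFiberCand A A' B')) p ↔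
      (IsDirCycle (reorient A' B' ∪ (A \ A')) p →
        ∃ a ∈ cycleArcs p, a ∈ A \ A' ∧ TransGen (ArcRel (reorient A' B')) a.2 a.1) := by
  constructor
  · intro h hp
    by_contra! hno
    refine h ⟨hp.1, hp.2.1, fun a ha => ?_⟩
    rcases hp.2.2 a ha with haE' | haA
    · exact Or.inl haE'
    · exact Or.inr ⟨haA, fun haB => hno a ha haA haB.2⟩
  · intro h hp
    obtain ⟨a, ha, ⟨haA, haA'⟩, hpath⟩ :=
      h (hp.mono (Set.union_subset_union_right _ Set.sdiff_subset))
    rcases hp.2.2 a ha with haE' | ⟨-, haB⟩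
    · exact haA' (reorient_inter_subset hA hsub hB'.1 ⟨haE', haA⟩)
    · exact haB ⟨haA, hpath⟩

end Fiber

end

theorem stmt_4_general {V : Type*} (A A' : Set (V × V)) (hA : IsDAG A)
    (hsub : A' ⊆ A) (B' : Set (V × V)) (hB' : ARmem A' B') :
    ((ARmem A (minFiberCand A A' B') ↔
        ∃ M, (ARmem A M ∧ M ∩ A' = B') ∧
          ∀ C, ARmem A C → C ∩ A' = B' → M ⊆ C) ∧
      (ARmem A (minFiberCand A A' B') ↔
        ∀ p : List V, IsDirCycle (reorient A' B' ∪ (A \ A')) p →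
          ∃ a ∈ cycleArcs p, a ∈ A \ A' ∧
            Relation.TransGen (ArcRel (reorient A' B')) a.2 a.1)) ∧
    (ARmem A (minFiberCand A A' B') →
      minFiberCand A A' B' ∩ A' = B' ∧
        ∀ C, ARmem A C → C ∩ A' = B' → minFiberCand A A' B' ⊆ C) := by
  have hcycles : ARmem A (minFiberCand A A' B') ↔
      ∀ p : List V, IsDirCycle (reorient A' B' ∪ (A \ A')) p →
        ∃ a ∈ cycleArcs p, a ∈ A \ A' ∧ Relation.TransGen (ArcRel (reorient A' B')) a.2 a.1 := by
    rw [ARmem, and_iff_right minFiberCand_subset, acyclicArcs_reorient_minFiberCand_iff hsub hB',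
      acyclicArcs_iff_forall_not_isDirCycle]
    exact forall_congr' (not_isDirCycle_diff_minFiberCand_iff hA.2.1 hsub hB')
  exact ⟨⟨armem_minFiberCand_iff_exists_least hA.1 hsub hB', hcycles⟩,
    fun _ => ⟨minFiberCand_inter_eq hsub hB', fun _ => minFiberCand_subset_of_inter_eq hsub⟩⟩

/-- Characterization of the fibers of the restriction map
admitting a least element. -/
theorem stmt_4 {V : Type*} [Fintype V] (A A' : Set (V × V)) (hA : IsDAG A)
    (hA' : IsDAG A') (hsub : A' ⊆ A) (B' : Set (V × V)) (hB' : ARmem A' B') :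
    ((ARmem A (minFiberCand A A' B') ↔
        ∃ M, (ARmem A M ∧ M ∩ A' = B') ∧
          ∀ C, ARmem A C → C ∩ A' = B' → M ⊆ C) ∧
      (ARmem A (minFiberCand A A' B') ↔
        ∀ p : List V, IsDirCycle (reorient A' B' ∪ (A \ A')) p →
          ∃ a ∈ cycleArcs p, a ∈ A \ A' ∧
            Relation.TransGen (ArcRel (reorient A' B')) a.2 a.1)) ∧
    (ARmem A (minFiberCand A A' B') →
      minFiberCand A A' B' ∩ A' = B' ∧
        ∀ C, ARmem A C → C ∩ A' = B' → minFiberCand A A' B' ⊆ C) :=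
  stmt_4_general A A' hA hsub B' hB'
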